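/- arXiv:1609.08037 — 2 statements merged into one kernel-verified Lean document; each statement's English description precedes it below -/
import Mathlib

section
/- Let X be an ℝ^q-valued random variable with mean 0, covariance matrix Σ with smallest eigenvalue λ₁ > 0, and finite third moment E|X|³. Let χ be the characteristic function of X. Then for every s with |s| ≤ λ₁ / max(1, E|X|³), one has |χ(s)| ≤ exp(-(1/4) s·Σs). Consequently, if ψ_m(z) = χ(m^{-1/2} z)^m, then |ψ_m(z)| ≤ exp(-(1/4) z·Σz) for |z| ≤ m^{1/2} λ₁ / max(1, E|X|³). -/
/-!
Expanding `e^{it}` to second order with remainder `|t|³/6`, a centred real random variable `Y`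
satisfies `‖E e^{iY} - (1 - E Y²/2)‖ ≤ E|Y|³/6`. For `Y = ⟪s, X⟫` with `‖s‖ E‖X‖³ ≤ λ₁` the third
moment is dominated by the second: `E|Y|³ ≤ ‖s‖³ E‖X‖³ ≤ λ₁ ‖s‖² ≤ s·Σs = E Y²`. Integrating
`3y² ≤ 2|y|³ + 1` then gives `E Y² ≤ 1`, so `1 - E Y²/2` is the norm of the main term and
`|χ s| ≤ 1 - s·Σs/3 ≤ exp(-s·Σs/3)`. The bound on `ψ_m` is the case `s = m^{-1/2} z`.
-/

open MeasureTheory Complex Finset ComplexConjugate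
open scoped RealInnerProductSpace

lemma hasDerivAt_sum_range_pow_div_factorial {𝕜 : Type*} [RCLike 𝕜] (n : ℕ) (z : 𝕜) :
    HasDerivAt (fun w : 𝕜 => ∑ k ∈ range (n + 1), w ^ k / k.factorial)
      (∑ k ∈ range n, z ^ k / k.factorial) z := by
  induction n with
  | zero => simpa using hasDerivAt_const z (1 : 𝕜)
  | succ n ih =>
    simp_rw [sum_range_succ _ (n + 1)]
    refine (ih.add ((hasDerivAt_pow (n + 1) z).div_const _)).congr_deriv ?_
    rw [sum_range_succ, Nat.factorial_succ, Nat.cast_mul, Nat.add_sub_cancel,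
      mul_div_mul_left _ _ (Nat.cast_ne_zero.2 n.succ_ne_zero)]

lemma norm_exp_ofReal_mul_I_sub_sum_le_of_nonneg (n : ℕ) {t : ℝ} (ht : 0 ≤ t) :
    ‖exp (t * I) - ∑ k ∈ range n, (t * I) ^ k / k.factorial‖ ≤ t ^ n / n.factorial := by
  induction n generalizing t with
  | zero => simp [norm_exp_ofReal_mul_I]
  | succ n ih =>
    have hderiv (u : ℝ) : HasDerivAt
        (fun u : ℝ => exp (u * I) - ∑ k ∈ range (n + 1), (u * I) ^ k / k.factorial)
        ((exp (u * I) - ∑ k ∈ range n, (u * I) ^ k / k.factorial) * I) u :=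
      (((hasDerivAt_exp _).sub (hasDerivAt_sum_range_pow_div_factorial n _)).comp (u : ℂ)
        (hasDerivAt_mul_const I)).comp_ofReal
    have hbound (u : ℝ) :
        HasDerivAt (fun u : ℝ => u ^ (n + 1) / (n + 1).factorial) (u ^ n / n.factorial) u := by
      refine ((hasDerivAt_pow (n + 1) u).div_const _).congr_deriv ?_
      rw [Nat.factorial_succ, Nat.cast_mul, Nat.add_sub_cancel,
        mul_div_mul_left _ _ (Nat.cast_ne_zero.2 n.succ_ne_zero)]
    refine image_norm_le_of_norm_deriv_right_le_deriv_boundary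
      (fun u _ => (hderiv u).continuousAt.continuousWithinAt)
      (fun u _ => (hderiv u).hasDerivWithinAt) (by simp [sum_range_succ']) hbound
      (fun u hu => ?_) ⟨ht, le_rfl⟩
    rw [norm_mul, norm_I, mul_one]
    exact ih hu.1

lemma norm_exp_ofReal_mul_I_sub_sum_le (n : ℕ) (t : ℝ) :
    ‖exp (t * I) - ∑ k ∈ range n, (t * I) ^ k / k.factorial‖ ≤ |t| ^ n / n.factorial := by
  rcases le_total 0 t with ht | ht
  · simpa [abs_of_nonneg ht] using norm_exp_ofReal_mul_I_sub_sum_le_of_nonneg n ht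
  · have hconj : conj (exp (t * I) - ∑ k ∈ range n, (t * I) ^ k / k.factorial)
        = exp ((-t : ℝ) * I) - ∑ k ∈ range n, ((-t : ℝ) * I) ^ k / k.factorial := by
      simp [← exp_conj]
    rw [← RCLike.norm_conj, hconj, abs_of_nonpos ht]
    exact norm_exp_ofReal_mul_I_sub_sum_le_of_nonneg n (neg_nonneg.2 ht)

section RealRandomVariable

variable {Ω : Type*} [MeasurableSpace Ω] {μ : Measure Ω} [IsProbabilityMeasure μ] {Y : Ω → ℝ}

lemma integrable_sq_of_integrable_abs_pow_three (hY : AEStronglyMeasurable Y μ)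
    (hY3 : Integrable (fun ω => |Y ω| ^ 3) μ) : Integrable (fun ω => Y ω ^ 2) μ := by
  simpa using integrable_norm_pow_of_le hY (by norm_num : 2 ≤ 3)
    (by simpa only [Real.norm_eq_abs] using hY3)

lemma norm_integral_exp_mul_I_sub_le (hY : AEStronglyMeasurable Y μ)
    (hY3 : Integrable (fun ω => |Y ω| ^ 3) μ) (hmean : ∫ ω, Y ω ∂μ = 0) :
    ‖∫ ω, exp (Y ω * I) ∂μ - (1 - (∫ ω, Y ω ^ 2 ∂μ : ℝ) / 2)‖ ≤ (∫ ω, |Y ω| ^ 3 ∂μ) / 6 := by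
  have hY1 : Integrable Y μ := (integrable_norm_iff hY).1 <| by
    simpa using integrable_norm_pow_of_le hY (by norm_num : 1 ≤ 3)
      (by simpa only [Real.norm_eq_abs] using hY3)
  have hY2 := integrable_sq_of_integrable_abs_pow_three hY hY3
  have hexp : Integrable (fun ω => exp (Y ω * I)) μ :=
    (integrable_const (1 : ℝ)).mono' (by fun_prop) (by simp [norm_exp_ofReal_mul_I])
  have hlin : Integrable (fun ω => (Y ω : ℂ) * I) μ := hY1.ofReal.mul_const I
  have hquad : Integrable (fun ω => ((Y ω ^ 2 : ℝ) : ℂ) / 2) μ := hY2.ofReal.div_const 2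
  have haffine : Integrable (fun ω => 1 + (Y ω : ℂ) * I) μ := (integrable_const 1).add hlin
  have hpoly : Integrable (fun ω => 1 + (Y ω : ℂ) * I - ((Y ω ^ 2 : ℝ) : ℂ) / 2) μ :=
    haffine.sub hquad
  have hpoly_int : ∫ ω, (1 + (Y ω : ℂ) * I - ((Y ω ^ 2 : ℝ) : ℂ) / 2) ∂μ
      = 1 - (∫ ω, Y ω ^ 2 ∂μ : ℝ) / 2 := by
    rw [integral_sub haffine hquad, integral_add (integrable_const 1) hlin,
      integral_mul_const, integral_div, integral_complex_ofReal, integral_complex_ofReal, hmean]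
    simp
  calc ‖∫ ω, exp (Y ω * I) ∂μ - (1 - (∫ ω, Y ω ^ 2 ∂μ : ℝ) / 2)‖
      = ‖∫ ω, (exp (Y ω * I) - (1 + (Y ω : ℂ) * I - ((Y ω ^ 2 : ℝ) : ℂ) / 2)) ∂μ‖ := by
        rw [integral_sub hexp hpoly, hpoly_int]
    _ ≤ ∫ ω, |Y ω| ^ 3 / 6 ∂μ := by
        refine norm_integral_le_of_norm_le (hY3.div_const 6) (ae_of_all _ fun ω => ?_)
        have htaylor : ∑ k ∈ range 3, ((Y ω : ℂ) * I) ^ k / k.factorial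
            = 1 + (Y ω : ℂ) * I - ((Y ω ^ 2 : ℝ) : ℂ) / 2 := by
          simp only [sum_range_succ, range_zero, sum_empty, Nat.factorial]
          push_cast
          linear_combination (↑(Y ω) ^ 2 / 2 : ℂ) * I_sq
        rw [← htaylor]
        exact (norm_exp_ofReal_mul_I_sub_sum_le 3 (Y ω)).trans_eq (by norm_num [Nat.factorial])
    _ = (∫ ω, |Y ω| ^ 3 ∂μ) / 6 := integral_div _ _

lemma integral_sq_le_one_of_integral_abs_pow_three_le (hY : AEStronglyMeasurable Y μ)
    (hY3 : Integrable (fun ω => |Y ω| ^ 3) μ)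
    (h : ∫ ω, |Y ω| ^ 3 ∂μ ≤ ∫ ω, Y ω ^ 2 ∂μ) : ∫ ω, Y ω ^ 2 ∂μ ≤ 1 := by
  have hY2 := integrable_sq_of_integrable_abs_pow_three hY hY3
  have hamgm : ∫ ω, 3 * Y ω ^ 2 ∂μ ≤ ∫ ω, (2 * |Y ω| ^ 3 + 1) ∂μ :=
    integral_mono (hY2.const_mul 3) ((hY3.const_mul 2).add (integrable_const 1)) fun ω => by
      nlinarith [sq_abs (Y ω), abs_nonneg (Y ω), sq_nonneg (|Y ω| - 1)]
  rw [integral_const_mul, integral_add (hY3.const_mul 2) (integrable_const 1),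
    integral_const_mul, integral_const, probReal_univ, smul_eq_mul, mul_one] at hamgm
  linarith

lemma norm_integral_exp_mul_I_le_exp_of_integral_abs_pow_three_le
    (hY : AEStronglyMeasurable Y μ) (hY3 : Integrable (fun ω => |Y ω| ^ 3) μ)
    (hmean : ∫ ω, Y ω ∂μ = 0) (h : ∫ ω, |Y ω| ^ 3 ∂μ ≤ ∫ ω, Y ω ^ 2 ∂μ) :
    ‖∫ ω, exp (Y ω * I) ∂μ‖ ≤ Real.exp (-(1 / 4) * ∫ ω, Y ω ^ 2 ∂μ) := by
  set V := ∫ ω, Y ω ^ 2 ∂μ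
  have hV1 : V ≤ 1 := integral_sq_le_one_of_integral_abs_pow_three_le hY hY3 h
  have hV0 : 0 ≤ V := integral_nonneg fun ω => sq_nonneg _
  have hnorm : ‖1 - (V : ℂ) / 2‖ = 1 - V / 2 := by
    rw [show (1 - (V : ℂ) / 2) = ((1 - V / 2 : ℝ) : ℂ) by push_cast; ring, norm_real,
      Real.norm_of_nonneg (by linarith)]
  calc ‖∫ ω, exp (Y ω * I) ∂μ‖
      ≤ ‖1 - (V : ℂ) / 2‖ + ‖∫ ω, exp (Y ω * I) ∂μ - (1 - (V : ℂ) / 2)‖ := norm_le_insert' _ _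
    _ ≤ 1 - V / 3 := by
        rw [hnorm]; linarith [norm_integral_exp_mul_I_sub_le hY hY3 hmean]
    _ ≤ Real.exp (-(V / 3)) := by linarith [Real.add_one_le_exp (-(V / 3))]
    _ ≤ Real.exp (-(1 / 4) * V) := Real.exp_le_exp.2 (by linarith)

end RealRandomVariable

section InnerProductSpace

variable {E : Type*} [NormedAddCommGroup E] [InnerProductSpace ℝ E]

lemma abs_real_inner_pow_le (s x : E) (n : ℕ) : |⟪s, x⟫| ^ n ≤ ‖s‖ ^ n * ‖x‖ ^ n := by
  rw [← mul_pow]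
  exact pow_le_pow_left₀ (abs_nonneg _) (abs_real_inner_le_norm s x) n

variable [MeasurableSpace E] [OpensMeasurableSpace E] {μ : Measure E}

lemma integrable_abs_inner_pow_three (hm3 : Integrable (fun x => ‖x‖ ^ 3) μ) (s : E) :
    Integrable (fun x => |⟪s, x⟫| ^ 3) μ :=
  (hm3.const_mul (‖s‖ ^ 3)).mono' (by fun_prop) <| ae_of_all _ fun x => by
    simpa only [Real.norm_eq_abs, abs_pow, abs_abs] using abs_real_inner_pow_le s x 3

lemma norm_integral_exp_inner_mul_I_le [CompleteSpace E] [SecondCountableTopology E]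
    [IsProbabilityMeasure μ] (hmean : ∫ x, x ∂μ = 0)
    (hm3 : Integrable (fun x => ‖x‖ ^ 3) μ) {s : E} {lam : ℝ}
    (hlow : lam * ‖s‖ ^ 2 ≤ ∫ x, ⟪s, x⟫ ^ 2 ∂μ) (hs : ‖s‖ * ∫ x, ‖x‖ ^ 3 ∂μ ≤ lam) :
    ‖∫ x, exp (⟪s, x⟫ * I) ∂μ‖ ≤ Real.exp (-(1 / 4) * ∫ x, ⟪s, x⟫ ^ 2 ∂μ) := by
  have hid : Integrable (fun x : E => x) μ := (integrable_norm_iff aestronglyMeasurable_id).1 <| by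
    simpa using integrable_norm_pow_of_le aestronglyMeasurable_id (by norm_num : 1 ≤ 3) hm3
  refine norm_integral_exp_mul_I_le_exp_of_integral_abs_pow_three_le (by fun_prop)
    (integrable_abs_inner_pow_three hm3 s) (by rw [integral_inner hid, hmean, inner_zero_right]) ?_
  calc ∫ x, |⟪s, x⟫| ^ 3 ∂μ ≤ ∫ x, ‖s‖ ^ 3 * ‖x‖ ^ 3 ∂μ :=
        integral_mono (integrable_abs_inner_pow_three hm3 s) (hm3.const_mul _)
          fun x => abs_real_inner_pow_le s x 3
    _ = ‖s‖ ^ 2 * (‖s‖ * ∫ x, ‖x‖ ^ 3 ∂μ) := by rw [integral_const_mul]; ring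
    _ ≤ ‖s‖ ^ 2 * lam := by gcongr
    _ ≤ ∫ x, ⟪s, x⟫ ^ 2 ∂μ := by linarith

end InnerProductSpace

theorem stmt_6_general (q : ℕ) (μ : Measure (EuclideanSpace ℝ (Fin q))) [IsProbabilityMeasure μ]
    (hmean : ∫ x, x ∂μ = 0)
    (hm3 : Integrable (fun x => ‖x‖ ^ 3) μ)
    (Q : EuclideanSpace ℝ (Fin q) → ℝ)
    (hQ : ∀ s, Q s = ∫ x, (inner ℝ s x : ℝ) ^ 2 ∂μ)
    (lam1 : ℝ)
    (hlow : ∀ s : EuclideanSpace ℝ (Fin q), lam1 * ‖s‖ ^ 2 ≤ Q s)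
    (χ : EuclideanSpace ℝ (Fin q) → ℂ)
    (hχ : ∀ s, χ s = ∫ x, Complex.exp (((inner ℝ s x : ℝ) : ℂ) * Complex.I) ∂μ) :
    (∀ s : EuclideanSpace ℝ (Fin q),
      ‖s‖ ≤ lam1 / max 1 (∫ x, ‖x‖ ^ 3 ∂μ) →
        ‖χ s‖ ≤ Real.exp (-(1/4) * Q s)) ∧
    (∀ m : ℕ, 0 < m → ∀ z : EuclideanSpace ℝ (Fin q),
      ‖z‖ ≤ Real.sqrt m * lam1 / max 1 (∫ x, ‖x‖ ^ 3 ∂μ) →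
        ‖χ (((m : ℝ) ^ (-(1:ℝ)/2)) • z) ^ m‖ ≤ Real.exp (-(1/4) * Q z)) := by
  set K := max 1 (∫ x, ‖x‖ ^ 3 ∂μ)
  have hK : 0 < K := lt_max_of_lt_left one_pos
  have hball (s) (hs : ‖s‖ ≤ lam1 / K) : ‖χ s‖ ≤ Real.exp (-(1 / 4) * Q s) := by
    rw [hχ, hQ]
    refine norm_integral_exp_inner_mul_I_le hmean hm3 (hQ s ▸ hlow s) ?_
    calc ‖s‖ * ∫ x, ‖x‖ ^ 3 ∂μ ≤ ‖s‖ * K := by gcongr; exact le_max_right _ _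
      _ ≤ lam1 := (le_div_iff₀ hK).1 hs
  refine ⟨hball, fun m hm z hz => ?_⟩
  have hm' : (0 : ℝ) < m := Nat.cast_pos.2 hm
  set c := (m : ℝ) ^ (-(1 : ℝ) / 2)
  have hc_sqrt : c * √m = 1 := by
    rw [Real.sqrt_eq_rpow, ← Real.rpow_add hm']
    norm_num
  have hc_sq : m * c ^ 2 = 1 := by
    rw [← Real.sq_sqrt hm'.le, ← mul_pow, mul_comm, hc_sqrt, one_pow]
  have hQc : Q (c • z) = c ^ 2 * Q z := by
    simp only [hQ, real_inner_smul_left, mul_pow, integral_const_mul]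
  have hcz : ‖c • z‖ ≤ lam1 / K := by
    rw [norm_smul, Real.norm_of_nonneg (by positivity)]
    calc c * ‖z‖ ≤ c * (√m * lam1 / K) := by gcongr
      _ = lam1 / K := by rw [mul_div_assoc, ← mul_assoc, hc_sqrt, one_mul]
  calc ‖χ (c • z) ^ m‖ = ‖χ (c • z)‖ ^ m := norm_pow _ _
    _ ≤ Real.exp (-(1 / 4) * Q (c • z)) ^ m := by gcongr; exact hball _ hcz
    _ = Real.exp (-(1 / 4) * Q z) := by
        rw [← Real.exp_nat_mul, hQc]
        congr 1
        linear_combination (-(1 / 4) * Q z) * hc_sq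

/-- for `X ∼ μ` mean zero, with covariance quadratic form
`Q s = s·Σs = ∫ ⟪s,x⟫² dμ` whose smallest eigenvalue is `λ₁ > 0`
(expressed via `λ₁‖s‖² ≤ Q s` and attainment), and finite third moment,
the characteristic function satisfies `|χ s| ≤ exp(-Q s / 4)` for
`‖s‖ ≤ λ₁ / max 1 (E|X|³)`, and consequently
`|ψ_m z| = |χ(m^{-1/2} z)^m| ≤ exp(-z·Σz/4)` for `‖z‖ ≤ √m · λ₁ / max 1 (E|X|³)`. -/
theorem stmt_6 (q : ℕ) (μ : Measure (EuclideanSpace ℝ (Fin q))) [IsProbabilityMeasure μ]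
    (hmean : ∫ x, x ∂μ = 0)
    (hm3 : Integrable (fun x => ‖x‖ ^ 3) μ)
    (Q : EuclideanSpace ℝ (Fin q) → ℝ)
    (hQ : ∀ s, Q s = ∫ x, (inner ℝ s x : ℝ) ^ 2 ∂μ)
    (lam1 : ℝ) (hlam1 : 0 < lam1)
    (hlow : ∀ s : EuclideanSpace ℝ (Fin q), lam1 * ‖s‖ ^ 2 ≤ Q s)
    (hattain : ∃ s : EuclideanSpace ℝ (Fin q), ‖s‖ = 1 ∧ Q s = lam1)
    (χ : EuclideanSpace ℝ (Fin q) → ℂ)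
    (hχ : ∀ s, χ s = ∫ x, Complex.exp (((inner ℝ s x : ℝ) : ℂ) * Complex.I) ∂μ) :
    (∀ s : EuclideanSpace ℝ (Fin q),
      ‖s‖ ≤ lam1 / max 1 (∫ x, ‖x‖ ^ 3 ∂μ) →
        ‖χ s‖ ≤ Real.exp (-(1/4) * Q s)) ∧
    (∀ m : ℕ, 0 < m → ∀ z : EuclideanSpace ℝ (Fin q),
      ‖z‖ ≤ Real.sqrt m * lam1 / max 1 (∫ x, ‖x‖ ^ 3 ∂μ) →
        ‖χ (((m : ℝ) ^ (-(1:ℝ)/2)) • z) ^ m‖ ≤ Real.exp (-(1/4) * Q z)) :=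
  stmt_6_general q μ hmean hm3 Q hQ lam1 hlow χ hχ
end

section
/- Let Σ_r = ∫_{Ω_r} x x^⊤ ν(dx), where Ω_r = {2^{-r-1} < |x| ≤ 2^{-r}} and ν is finite on Ω_r with ν_r = ν(Ω_r) > 0. Suppose there exist ρ > 0 and γ ∈ (0,1) such that |∫_{Ω_r} cos(2^r s·x) ν(dx)| ≤ γ ν_r for all |s| ≥ ρ. Then for every unit vector v ∈ ℝ^q, v·Σ_r v ≥ 2^{-2r+1} ρ^{-2} (1-γ) ν_r; in particular the smallest eigenvalue λ_{1,r} of Σ_r satisfies λ_{1,r} ≥ 2^{-2r+1} ρ^{-2} (1-γ) ν_r. -/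
/-!
Since `1 - cos t ≤ t² / 2`, the second moment `∫ f²` of any real random variable `f` dominates
twice `∫ (1 - cos f)`. Taking `f x = 2^r ⟨ρ v, x⟩` for a unit vector `v`, the Cramér-type bound on
`∫ cos f` makes `∫ (1 - cos f) ≥ (1 - γ) ν_r`, which is the claim after dividing by `(2^r ρ)²`.
-/

open MeasureTheory

section CosineMoment

variable {α : Type*} [MeasurableSpace α] {μ : Measure α} [IsFiniteMeasure μ]

theorem measureReal_univ_sub_integral_cos_le {f : α → ℝ} (hf : MemLp f 2 μ) :
    μ.real Set.univ - ∫ x, Real.cos (f x) ∂μ ≤ (∫ x, f x ^ 2 ∂μ) / 2 := by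
  have hcos : Integrable (fun x => Real.cos (f x)) μ :=
    MemLp.integrable (q := ⊤) le_top <|
      MemLp.of_bound (Real.continuous_cos.comp_aestronglyMeasurable hf.1) 1
        (Filter.Eventually.of_forall fun x => by simpa using Real.abs_cos_le_one (f x))
  calc μ.real Set.univ - ∫ x, Real.cos (f x) ∂μ = ∫ x, (1 - Real.cos (f x)) ∂μ := by
        rw [integral_sub (integrable_const 1) hcos, integral_const, smul_eq_mul, mul_one]
    _ ≤ ∫ x, f x ^ 2 / 2 ∂μ :=
        integral_mono ((integrable_const 1).sub hcos) (hf.integrable_sq.div_const 2)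
          fun x => by linarith [Real.one_sub_sq_div_two_le_cos (x := f x)]
    _ = (∫ x, f x ^ 2 ∂μ) / 2 := integral_div 2 _

end CosineMoment

section InnerProductSpace

variable {E : Type*} [NormedAddCommGroup E] [InnerProductSpace ℝ E] [MeasurableSpace E]
  {μ : Measure E}

theorem memLp_inner_restrict_of_subset_closedBall [OpensMeasurableSpace E] [IsFiniteMeasure μ]
    {s : Set E} {R : ℝ} (hs : MeasurableSet s) (hR : s ⊆ Metric.closedBall 0 R) (w : E) (p : ENNReal) :
    MemLp (fun x => inner ℝ w x) p (μ.restrict s) := by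
  refine MemLp.of_bound (continuous_const.inner continuous_id).aestronglyMeasurable (‖w‖ * R) ?_
  filter_upwards [ae_restrict_mem hs] with x hx
  calc ‖inner ℝ w x‖ ≤ ‖w‖ * ‖x‖ := norm_inner_le_norm w x
    _ ≤ ‖w‖ * R := by gcongr; simpa using hR hx

theorem div_sq_mul_le_integral_inner_sq [IsFiniteMeasure μ] {v : E} {k ρ γ : ℝ}
    (hv : MemLp (fun x => inner ℝ v x) 2 μ) (hkρ : k * ρ ≠ 0)
    (hcos : ∫ x, Real.cos (k * inner ℝ (ρ • v) x) ∂μ ≤ γ * μ.real Set.univ) :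
    2 / (k * ρ) ^ 2 * (1 - γ) * μ.real Set.univ ≤ ∫ x, inner ℝ v x ^ 2 ∂μ := by
  have hmoment := measureReal_univ_sub_integral_cos_le (hv.const_mul (k * ρ))
  simp only [real_inner_smul_left, ← mul_assoc] at hcos
  simp only [mul_pow (k * ρ), integral_const_mul] at hmoment
  have hgap : (1 - γ) * μ.real Set.univ ≤ (k * ρ) ^ 2 * (∫ x, inner ℝ v x ^ 2 ∂μ) / 2 := by
    linarith
  calc 2 / (k * ρ) ^ 2 * (1 - γ) * μ.real Set.univ
      = 2 / (k * ρ) ^ 2 * ((1 - γ) * μ.real Set.univ) := mul_assoc _ _ _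
    _ ≤ 2 / (k * ρ) ^ 2 * ((k * ρ) ^ 2 * (∫ x, inner ℝ v x ^ 2 ∂μ) / 2) := by gcongr
    _ = ∫ x, inner ℝ v x ^ 2 ∂μ := by field_simp; exact mul_div_cancel_left₀ _ hkρ

end InnerProductSpace

theorem stmt_19_general (q : ℕ) (r : ℕ)
    (ν : Measure (EuclideanSpace ℝ (Fin q))) [IsFiniteMeasure ν]
    (Ω : Set (EuclideanSpace ℝ (Fin q)))
    (hΩ : Ω = {x | (2 : ℝ) ^ (-(r : ℝ) - 1) < ‖x‖ ∧ ‖x‖ ≤ (2 : ℝ) ^ (-(r : ℝ))})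
    (ρ γ : ℝ) (hρ : 0 < ρ)
    (hcos : ∀ s : EuclideanSpace ℝ (Fin q), ρ ≤ ‖s‖ →
      |∫ x in Ω, Real.cos ((2 : ℝ) ^ (r : ℕ) * (inner ℝ s x : ℝ)) ∂ν| ≤ γ * (ν Ω).toReal) :
    (∀ v : EuclideanSpace ℝ (Fin q), ‖v‖ = 1 →
      (∫ x in Ω, (inner ℝ v x : ℝ) ^ 2 ∂ν)
        ≥ (2 : ℝ) ^ (-2 * (r : ℝ) + 1) * ρ⁻¹ ^ 2 * (1 - γ) * (ν Ω).toReal) ∧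
    ∀ lam1 : ℝ,
      IsLeast {t : ℝ | ∃ v : EuclideanSpace ℝ (Fin q), ‖v‖ = 1 ∧
          t = ∫ x in Ω, (inner ℝ v x : ℝ) ^ 2 ∂ν} lam1 →
        lam1 ≥ (2 : ℝ) ^ (-2 * (r : ℝ) + 1) * ρ⁻¹ ^ 2 * (1 - γ) * (ν Ω).toReal := by
  have hΩm : MeasurableSet Ω := hΩ ▸
    (measurableSet_lt measurable_const measurable_norm).inter
      (measurableSet_le measurable_norm measurable_const)
  have hΩR : Ω ⊆ Metric.closedBall 0 ((2 : ℝ) ^ (-(r : ℝ))) := fun x hx => by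
    rw [hΩ] at hx; simpa using hx.2
  have hconst : (2 : ℝ) ^ (-2 * (r : ℝ) + 1) * ρ⁻¹ ^ 2 = 2 / ((2 : ℝ) ^ r * ρ) ^ 2 := by
    rw [Real.rpow_add two_pos, Real.rpow_mul zero_le_two, Real.rpow_neg zero_le_two,
      Real.rpow_natCast]
    field_simp
    rw [mul_right_comm, ← pow_mul, mul_comm r, pow_mul, ← mul_pow]
    norm_num
  have hdirection : ∀ v : EuclideanSpace ℝ (Fin q), ‖v‖ = 1 →
      (∫ x in Ω, (inner ℝ v x : ℝ) ^ 2 ∂ν)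
        ≥ (2 : ℝ) ^ (-2 * (r : ℝ) + 1) * ρ⁻¹ ^ 2 * (1 - γ) * (ν Ω).toReal := by
    intro v hv
    have hρv : ρ ≤ ‖ρ • v‖ := by rw [norm_smul, hv, Real.norm_of_nonneg hρ.le, mul_one]
    rw [hconst, ← measureReal_def, ← measureReal_restrict_apply_univ]
    refine div_sq_mul_le_integral_inner_sq
      (memLp_inner_restrict_of_subset_closedBall hΩm hΩR v 2) (by positivity) ?_
    rw [measureReal_restrict_apply_univ, measureReal_def]
    exact (le_abs_self _).trans (hcos _ hρv)
  refine ⟨hdirection, fun lam1 hlam1 => ?_⟩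
  obtain ⟨v, hv, rfl⟩ := hlam1.1
  exact hdirection v hv

/-- under the uniform Cramér-type bound
`|∫_{Ω_r} cos(2^r s·x) ν(dx)| ≤ γ ν_r` for `|s| ≥ ρ`, every unit vector `v`
satisfies `v·Σ_r v = ∫_{Ω_r} ⟨v,x⟩² ν(dx) ≥ 2^{-2r+1} ρ^{-2} (1-γ) ν_r`; in
particular the smallest eigenvalue `λ_{1,r}` of `Σ_r` (the minimum of the
Rayleigh quotient over unit vectors) satisfies the same lower bound. -/
theorem stmt_19 (q : ℕ) (hq : 0 < q) (r : ℕ)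
    (ν : Measure (EuclideanSpace ℝ (Fin q))) [IsFiniteMeasure ν]
    (Ω : Set (EuclideanSpace ℝ (Fin q)))
    (hΩ : Ω = {x | (2 : ℝ) ^ (-(r : ℝ) - 1) < ‖x‖ ∧ ‖x‖ ≤ (2 : ℝ) ^ (-(r : ℝ))})
    (hν : 0 < (ν Ω).toReal)
    (ρ γ : ℝ) (hρ : 0 < ρ) (hγ0 : 0 < γ) (hγ1 : γ < 1)
    (hcos : ∀ s : EuclideanSpace ℝ (Fin q), ρ ≤ ‖s‖ →
      |∫ x in Ω, Real.cos ((2 : ℝ) ^ (r : ℕ) * (inner ℝ s x : ℝ)) ∂ν| ≤ γ * (ν Ω).toReal) :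
    (∀ v : EuclideanSpace ℝ (Fin q), ‖v‖ = 1 →
      (∫ x in Ω, (inner ℝ v x : ℝ) ^ 2 ∂ν)
        ≥ (2 : ℝ) ^ (-2 * (r : ℝ) + 1) * ρ⁻¹ ^ 2 * (1 - γ) * (ν Ω).toReal) ∧
    ∀ lam1 : ℝ,
      IsLeast {t : ℝ | ∃ v : EuclideanSpace ℝ (Fin q), ‖v‖ = 1 ∧
          t = ∫ x in Ω, (inner ℝ v x : ℝ) ^ 2 ∂ν} lam1 →
        lam1 ≥ (2 : ℝ) ^ (-2 * (r : ℝ) + 1) * ρ⁻¹ ^ 2 * (1 - γ) * (ν Ω).toReal :=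
  stmt_19_general q r ν Ω hΩ ρ γ hρ hcos
end
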